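/- Let A be a real symmetric positive semi-definite matrix indexed by a finite set X with entries in [0,1] and diagonal entries equal to 1, and let q = min over probability distributions P on X of Σ_{x,x'} P(x)P(x') A_{x,x'}. Suppose ψ_1,…,ψ_M are unit vectors of the form ψ_i = ⊗_{ℓ=1}^n φ_{x_{iℓ}} where x_i ∈ X^n and the unit vectors φ_x satisfy |⟨φ_x, φ_{x'}⟩| ≥ A_{x,x'}, and suppose there is an orthonormal basis in which each coordinate is non-zero for at most L of the ψ_i. Then M ≤ L · q^{-n}. -/

import Mathlib

/-!
Let `P` minimise `Q ↦ Qᵀ A Q` over the simplex, with value `q`. Perturbing `P` towards a vertex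
shows `(A P)_x ≥ q` for every `x`. The product distribution `P^{⊗n}` then satisfies
`(A^{⊗n} P^{⊗n})_y ≥ q^n` and `(P^{⊗n})ᵀ A^{⊗n} P^{⊗n} = q^n`; since `A^{⊗n}` is positive
semidefinite, expanding `0 ≤ (R - s P^{⊗n})ᵀ A^{⊗n} (R - s P^{⊗n})` gives
`Rᵀ A^{⊗n} R ≥ s^2 q^n` for every nonnegative `R` of total mass `s`. Taking for `R` the
multiplicities of the codewords, `M^2 q^n ≤ ∑_{i,j} ∏_ℓ A_{x_{iℓ} x_{jℓ}} ≤ ∑_{i,j} |⟨ψ_i, ψ_j⟩|`.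
Expanding the overlaps in the basis `b` and applying Cauchy–Schwarz to each coordinate, which
meets at most `L` of the `ψ_i`, bounds the right-hand side by `L M`.
-/

open Finset Matrix
open scoped ComplexOrder InnerProductSpace

open Filter Topology in
theorem nonneg_of_forall_nonneg_add_mul {a b : ℝ} (h : ∀ t, 0 < t → t ≤ 1 → 0 ≤ a + t * b) :
    0 ≤ a := by
  have hlim : Tendsto (fun t => a + t * b) (𝓝[>] 0) (𝓝 a) :=
    tendsto_nhdsWithin_of_tendsto_nhds
      ((by fun_prop : Continuous fun t => a + t * b).tendsto' 0 a (by simp))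
  exact ge_of_tendsto hlim (by
    filter_upwards [Ioc_mem_nhdsGT zero_lt_one] with t ht using h t ht.1 ht.2)

namespace Matrix

variable {l m n R : Type*}

def tensorPow [CommMonoid R] (A : Matrix m n R) (ι : Type*) [Fintype ι] :
    Matrix (ι → m) (ι → n) R :=
  of fun y y' => ∏ ℓ, A (y ℓ) (y' ℓ)

variable {ι : Type*} [Fintype ι]

theorem tensorPow_mul [CommSemiring R] [Fintype m] [DecidableEq ι] (A : Matrix l m R)
    (B : Matrix m n R) : tensorPow (A * B) ι = tensorPow A ι * tensorPow B ι := by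
  ext y y'
  simp only [tensorPow, mul_apply, of_apply, Fintype.prod_sum, prod_mul_distrib]

theorem conjTranspose_tensorPow [CommSemiring R] [StarRing R] (A : Matrix m n R) :
    (tensorPow A ι)ᴴ = tensorPow Aᴴ ι := by
  ext y y'
  simp [tensorPow, star_prod]

theorem PosSemidef.tensorPow {𝕜 : Type*} [RCLike 𝕜] [Fintype m] [DecidableEq ι]
    {A : Matrix m m 𝕜} (hA : A.PosSemidef) : (A.tensorPow ι).PosSemidef := by
  classical
  open scoped MatrixOrder in
  obtain ⟨C, rfl⟩ := CStarAlgebra.nonneg_iff_eq_star_mul_self.mp hA.nonneg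
  rw [star_eq_conjTranspose, tensorPow_mul, ← conjTranspose_tensorPow]
  exact posSemidef_conjTranspose_mul_self _

theorem tensorPow_mulVec_prod [CommSemiring R] [Fintype n] [DecidableEq ι] (A : Matrix m n R)
    (v : n → R) : tensorPow A ι *ᵥ (fun y => ∏ ℓ, v (y ℓ)) = fun y => ∏ ℓ, (A *ᵥ v) (y ℓ) := by
  ext y
  simp only [tensorPow, mulVec, dotProduct, of_apply, Fintype.prod_sum, prod_mul_distrib]

theorem dotProduct_prod_prod [CommSemiring R] [Fintype m] [DecidableEq ι] (u v : m → R) :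
    (fun y : ι → m => ∏ ℓ, u (y ℓ)) ⬝ᵥ (fun y => ∏ ℓ, v (y ℓ)) = (u ⬝ᵥ v) ^ Fintype.card ι := by
  simp only [dotProduct, ← prod_mul_distrib]
  rw [← Fintype.prod_sum fun _ a => u a * v a, prod_const, card_univ]


theorem sum_sum_mul_mul_eq_dotProduct_mulVec [Fintype m] [CommSemiring R] (A : Matrix m m R)
    (P : m → R) : ∑ a, ∑ a', P a * P a' * A a a' = P ⬝ᵥ A *ᵥ P := by
  simp only [dotProduct, mulVec, mul_sum]
  exact sum_congr rfl fun a _ => sum_congr rfl fun a' _ => by ring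

theorem sum_sum_apply_comp_eq_dotProduct_mulVec [Fintype m] [DecidableEq m] [CommSemiring R]
    {κ : Type*} [Fintype κ] (B : Matrix m m R) (f : κ → m) :
    ∑ i, ∑ j, B (f i) (f j) =
      (fun y => (#{i | f i = y} : R)) ⬝ᵥ B *ᵥ (fun y => (#{i | f i = y} : R)) := by
  have hfiber (g : m → R) : ∑ i, g (f i) = ∑ y, #{i | f i = y} * g y := by
    rw [← sum_fiberwise' univ f g]
    simp only [sum_const, nsmul_eq_mul]
  simp only [hfiber (B (f _))]
  rw [hfiber fun y => ∑ y', (#{i | f i = y'} : R) * B y y']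
  simp only [dotProduct, mulVec, mul_comm (B _ _)]

section Real

variable [Fintype m] {A : Matrix m m ℝ}

theorem IsHermitian.dotProduct_mulVec_comm (hA : A.IsHermitian) (u v : m → ℝ) :
    u ⬝ᵥ A *ᵥ v = v ⬝ᵥ A *ᵥ u := by
  rw [dotProduct_mulVec, ← mulVec_transpose, ← conjTranspose_eq_transpose_of_trivial, hA.eq,
    dotProduct_comm]

theorem IsHermitian.dotProduct_mulVec_add_smul (hA : A.IsHermitian) (u v : m → ℝ) (t : ℝ) :
    (u + t • v) ⬝ᵥ A *ᵥ (u + t • v) =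
      u ⬝ᵥ A *ᵥ u + 2 * t * (v ⬝ᵥ A *ᵥ u) + t ^ 2 * (v ⬝ᵥ A *ᵥ v) := by
  simp only [mulVec_add, mulVec_smul, add_dotProduct, dotProduct_add, smul_dotProduct,
    dotProduct_smul, smul_eq_mul, hA.dotProduct_mulVec_comm u v]
  ring

theorem exists_isMinOn_stdSimplex_dotProduct_mulVec [Nonempty m] (A : Matrix m m ℝ) :
    ∃ P ∈ stdSimplex ℝ m, IsMinOn (fun Q => Q ⬝ᵥ A *ᵥ Q) (stdSimplex ℝ m) P := by
  classical
  exact (isCompact_stdSimplex ℝ m).exists_isMinOn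
    ⟨_, single_mem_stdSimplex ℝ (Classical.arbitrary m)⟩ (by fun_prop)

theorem IsHermitian.dotProduct_mulVec_le_of_isMinOn (hA : A.IsHermitian) {P : m → ℝ}
    (hP : P ∈ stdSimplex ℝ m) (hmin : IsMinOn (fun Q => Q ⬝ᵥ A *ᵥ Q) (stdSimplex ℝ m) P)
    (x : m) : P ⬝ᵥ A *ᵥ P ≤ (A *ᵥ P) x := by
  classical
  set v := Pi.single x 1 - P
  have hv : v ⬝ᵥ A *ᵥ P = (A *ᵥ P) x - P ⬝ᵥ A *ᵥ P := by
    simp only [v, sub_dotProduct, single_dotProduct, one_mul]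
  suffices 0 ≤ 2 * (v ⬝ᵥ A *ᵥ P) by linarith
  refine nonneg_of_forall_nonneg_add_mul (b := v ⬝ᵥ A *ᵥ v) fun t ht0 ht1 => ?_
  have hmem : P + t • v ∈ stdSimplex ℝ m := by
    convert convex_stdSimplex ℝ m hP (single_mem_stdSimplex ℝ x) (sub_nonneg.2 ht1) ht0.le
      (by ring) using 1
    simp only [v]
    module
  have hle : P ⬝ᵥ A *ᵥ P ≤ (P + t • v) ⬝ᵥ A *ᵥ (P + t • v) := hmin hmem
  rw [hA.dotProduct_mulVec_add_smul] at hle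
  exact nonneg_of_mul_nonneg_right (by nlinarith) ht0

theorem PosSemidef.sq_sum_mul_le_dotProduct_mulVec (hA : A.PosSemidef) {w R : m → ℝ} {c : ℝ}
    (hw : ∀ y, c ≤ (A *ᵥ w) y) (hwc : w ⬝ᵥ A *ᵥ w ≤ c) (hR : 0 ≤ R) :
    (∑ y, R y) ^ 2 * c ≤ R ⬝ᵥ A *ᵥ R := by
  set s := ∑ y, R y
  have hs : 0 ≤ s := sum_nonneg fun y _ => hR y
  have hcross : s * c ≤ w ⬝ᵥ A *ᵥ R := by
    rw [hA.isHermitian.dotProduct_mulVec_comm, sum_mul]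
    exact sum_le_sum fun y _ => mul_le_mul_of_nonneg_left (hw y) (hR y)
  have hpsd := hA.dotProduct_mulVec_nonneg (R + (-s) • w)
  rw [star_trivial, hA.isHermitian.dotProduct_mulVec_add_smul] at hpsd
  nlinarith [mul_le_mul_of_nonneg_left hcross hs, mul_le_mul_of_nonneg_left hwc (sq_nonneg s)]

theorem PosSemidef.sq_sum_mul_pow_le_dotProduct_tensorPow_mulVec [DecidableEq ι]
    (hA : A.PosSemidef) {P : m → ℝ} (hP : ∀ x, P ⬝ᵥ A *ᵥ P ≤ (A *ᵥ P) x)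
    {R : (ι → m) → ℝ} (hR : 0 ≤ R) :
    (∑ y, R y) ^ 2 * (P ⬝ᵥ A *ᵥ P) ^ Fintype.card ι ≤ R ⬝ᵥ A.tensorPow ι *ᵥ R := by
  have hq : 0 ≤ P ⬝ᵥ A *ᵥ P := by simpa using hA.dotProduct_mulVec_nonneg P
  refine hA.tensorPow.sq_sum_mul_le_dotProduct_mulVec (w := fun y => ∏ ℓ, P (y ℓ))
    (fun y => ?_) ?_ hR
  · rw [tensorPow_mulVec_prod, ← card_univ, ← prod_const]
    exact prod_le_prod (fun _ _ => hq) fun ℓ _ => hP (y ℓ)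
  · rw [tensorPow_mulVec_prod, dotProduct_prod_prod]

theorem dotProduct_mulVec_pos_of_nonneg (hA : ∀ a a', 0 ≤ A a a') (hdiag : ∀ a, 0 < A a a)
    {P : m → ℝ} (hP0 : 0 ≤ P) (hP : P ≠ 0) : 0 < P ⬝ᵥ A *ᵥ P := by
  obtain ⟨a, ha⟩ := Function.ne_iff.mp hP
  have hPa : 0 < P a := lt_of_le_of_ne (hP0 a) (Ne.symm ha)
  have hAP : ∀ b, 0 ≤ (A *ᵥ P) b := fun b => sum_nonneg fun c _ => mul_nonneg (hA b c) (hP0 c)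
  calc 0 < P a * (A a a * P a) := by have := hdiag a; positivity
    _ ≤ P a * (A *ᵥ P) a := mul_le_mul_of_nonneg_left
        (single_le_sum (f := fun c => A a c * P c) (fun c _ => mul_nonneg (hA a c) (hP0 c))
          (mem_univ a)) (hP0 a)
    _ ≤ P ⬝ᵥ A *ᵥ P := single_le_sum (f := fun b => P b * (A *ᵥ P) b)
        (fun b _ => mul_nonneg (hP0 b) (hAP b)) (mem_univ a)

theorem isLeast_sum_sum_mul_mul_of_isMinOn {P : m → ℝ} (hP : P ∈ stdSimplex ℝ m)
    (hmin : IsMinOn (fun Q => Q ⬝ᵥ A *ᵥ Q) (stdSimplex ℝ m) P) :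
    IsLeast {v : ℝ | ∃ P : m → ℝ, (∀ a, 0 ≤ P a) ∧ ∑ a, P a = 1 ∧
      v = ∑ a, ∑ a', P a * P a' * A a a'} (P ⬝ᵥ A *ᵥ P) := by
  simp_rw [sum_sum_mul_mul_eq_dotProduct_mulVec]
  exact ⟨⟨P, hP.1, hP.2, rfl⟩, by rintro _ ⟨Q, hQ0, hQ1, rfl⟩; exact hmin ⟨hQ0, hQ1⟩⟩

end Real

end Matrix

theorem sq_sum_le_mul_sum_sq_of_ncard_ne_zero_le {κ : Type*} [Fintype κ] {f : κ → ℝ} {L : ℕ}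
    (hf : {i | f i ≠ 0}.ncard ≤ L) : (∑ i, f i) ^ 2 ≤ L * ∑ i, f i ^ 2 := by
  classical
  have hs : #{i | f i ≠ 0} ≤ L := by rwa [← Set.ncard_coe_finset, coe_filter_univ]
  calc (∑ i, f i) ^ 2 = (∑ i with f i ≠ 0, f i) ^ 2 := by rw [sum_filter_ne_zero]
    _ ≤ #{i | f i ≠ 0} * ∑ i with f i ≠ 0, f i ^ 2 := sq_sum_le_card_mul_sum_sq
    _ ≤ L * ∑ i, f i ^ 2 := by
      gcongr
      exact subset_univ _

section InnerProduct

variable {𝕜 : Type*} [RCLike 𝕜]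

theorem EuclideanSpace.inner_toLp_prod {ι κ : Type*} [Fintype ι] [Fintype κ] [DecidableEq ι]
    (u v : ι → EuclideanSpace 𝕜 κ) :
    ⟪WithLp.toLp 2 (fun w : ι → κ => ∏ ℓ, u ℓ (w ℓ)),
      WithLp.toLp 2 (fun w => ∏ ℓ, v ℓ (w ℓ))⟫_𝕜 = ∏ ℓ, ⟪u ℓ, v ℓ⟫_𝕜 := by
  simp only [PiLp.inner_apply, RCLike.inner_apply', map_prod, ← prod_mul_distrib]
  exact (Fintype.prod_sum fun ℓ k => starRingEnd 𝕜 (u ℓ k) * v ℓ k).symm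

theorem EuclideanSpace.norm_toLp_prod {ι κ : Type*} [Fintype ι] [Fintype κ] [DecidableEq ι]
    (u : ι → EuclideanSpace 𝕜 κ) :
    ‖WithLp.toLp 2 (fun w : ι → κ => ∏ ℓ, u ℓ (w ℓ))‖ = ∏ ℓ, ‖u ℓ‖ := by
  have h := inner_toLp_prod u u
  simp only [inner_self_eq_norm_sq_to_K] at h
  norm_cast at h
  rw [prod_pow] at h
  exact (sq_eq_sq₀ (norm_nonneg _) (prod_nonneg fun ℓ _ => norm_nonneg _)).1 h

theorem OrthonormalBasis.sum_sum_norm_inner_le {E ι κ : Type*} [NormedAddCommGroup E]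
    [InnerProductSpace 𝕜 E] [Fintype ι] [Fintype κ] (b : OrthonormalBasis ι 𝕜 E) (ψ : κ → E)
    {L : ℕ} (hsupp : ∀ k, {i | ⟪b k, ψ i⟫_𝕜 ≠ 0}.ncard ≤ L) :
    ∑ i, ∑ j, ‖⟪ψ i, ψ j⟫_𝕜‖ ≤ L * ∑ i, ‖ψ i‖ ^ 2 := by
  set c : ι → κ → ℝ := fun k i => ‖⟪b k, ψ i⟫_𝕜‖
  have hpair (i j : κ) : ‖⟪ψ i, ψ j⟫_𝕜‖ ≤ ∑ k, c k i * c k j := by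
    rw [← b.sum_inner_mul_inner]
    refine (norm_sum_le _ _).trans_eq (sum_congr rfl fun k _ => ?_)
    rw [norm_mul, norm_inner_symm]
  have hsupp' (k : ι) : {i | c k i ≠ 0}.ncard ≤ L := by simpa [c] using hsupp k
  calc ∑ i, ∑ j, ‖⟪ψ i, ψ j⟫_𝕜‖ ≤ ∑ i, ∑ j, ∑ k, c k i * c k j := by
        gcongr with i _ j _
        exact hpair i j
    _ = ∑ k, (∑ i, c k i) ^ 2 := by
        simp_rw [sq, sum_mul_sum]
        exact (sum_congr rfl fun i _ => sum_comm).trans sum_comm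
    _ ≤ ∑ k, L * ∑ i, c k i ^ 2 := by
        gcongr with k
        exact sq_sum_le_mul_sum_sq_of_ncard_ne_zero_le (hsupp' k)
    _ = L * ∑ i, ‖ψ i‖ ^ 2 := by
        rw [← mul_sum, sum_comm]
        simp only [c, b.sum_sq_norm_inner_right]

end InnerProduct

theorem stmt11 (X : Type) [Fintype X] [Nonempty X]
    (A : Matrix X X ℝ) (hA : A.PosSemidef)
    (hrange : ∀ x x', 0 ≤ A x x' ∧ A x x' ≤ 1) (hdiag : ∀ x, A x x = 1)
    (d n M L : ℕ)
    (φ : X → EuclideanSpace ℂ (Fin d)) (hφ : ∀ x, ‖φ x‖ = 1)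
    (hover : ∀ x x', A x x' ≤ ‖(inner ℂ (φ x) (φ x') : ℂ)‖)
    (x : Fin M → Fin n → X)
    (ψ : Fin M → EuclideanSpace ℂ (Fin n → Fin d))
    (hψ : ∀ i, ψ i = WithLp.toLp 2 (fun v => ∏ ℓ, φ (x i ℓ) (v ℓ)))
    (b : OrthonormalBasis (Fin n → Fin d) ℂ (EuclideanSpace ℂ (Fin n → Fin d)))
    (hsupp : ∀ k, {i | (inner ℂ (b k) (ψ i) : ℂ) ≠ 0}.ncard ≤ L) :
    (M : ℝ) ≤ (L : ℝ) * (sInf {v : ℝ | ∃ P : X → ℝ, (∀ a, 0 ≤ P a) ∧ ∑ a, P a = 1 ∧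
        v = ∑ a, ∑ a', P a * P a' * A a a'})⁻¹ ^ n := by
  classical
  obtain ⟨P, hP, hmin⟩ := Matrix.exists_isMinOn_stdSimplex_dotProduct_mulVec A
  rw [(Matrix.isLeast_sum_sum_mul_mul_of_isMinOn hP hmin).csInf_eq]
  set q := P ⬝ᵥ A *ᵥ P
  have hq : 0 < q := Matrix.dotProduct_mulVec_pos_of_nonneg (fun a a' => (hrange a a').1)
    (fun a => (hdiag a).symm ▸ one_pos) hP.1 fun h => by simpa [h] using hP.2
  have hcodes : (M : ℝ) ^ 2 * q ^ n ≤ ∑ i, ∑ j, ∏ ℓ, A (x i ℓ) (x j ℓ) := by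
    have hM : ∑ y, (#{i | x i = y} : ℝ) = M := by
      rw [← Nat.cast_sum, ← card_eq_sum_card_fiberwise fun _ _ => mem_univ _, card_univ,
        Fintype.card_fin]
    have h := hA.sq_sum_mul_pow_le_dotProduct_tensorPow_mulVec (ι := Fin n)
      (hA.isHermitian.dotProduct_mulVec_le_of_isMinOn hP hmin)
      (R := fun y => (#{i | x i = y} : ℝ)) fun y => Nat.cast_nonneg _
    rwa [← Matrix.sum_sum_apply_comp_eq_dotProduct_mulVec, hM, Fintype.card_fin] at h
  have hpairs : ∑ i, ∑ j, ∏ ℓ, A (x i ℓ) (x j ℓ) ≤ ∑ i, ∑ j, ‖(inner ℂ (ψ i) (ψ j) : ℂ)‖ := by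
    gcongr with i _ j _
    rw [hψ, hψ, EuclideanSpace.inner_toLp_prod, norm_prod]
    exact prod_le_prod (fun _ _ => (hrange _ _).1) fun _ _ => hover _ _
  have hoverlap : ∑ i, ∑ j, ‖(inner ℂ (ψ i) (ψ j) : ℂ)‖ ≤ L * M := by
    simpa [hψ, EuclideanSpace.norm_toLp_prod, hφ] using b.sum_sum_norm_inner_le ψ hsupp
  rw [inv_pow, ← div_eq_mul_inv, le_div_iff₀ (pow_pos hq n)]
  rcases Nat.eq_zero_or_pos M with rfl | hM
  · simp
  · exact le_of_mul_le_mul_left (by linarith) (by positivity : (0 : ℝ) < M)
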